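/- Let ξ₁, …, ξₙ be real random variables (not necessarily independent) such that for all 1 ≤ ℓ₁ ≤ ℓ₂ ≤ n, E[(Σ_{j=ℓ₁}^{ℓ₂} ξ_j)²] ≤ C (ℓ₂ - ℓ₁ + 1) for some constant C. Then E[(max_{1 ≤ k ≤ n} |Σ_{j=1}^k ξ_j|)²] ≤ C' C n (log 2n)² for an absolute constant C'. -/

import Mathlib

/-!
Write `M(a, n) = max_{k ≤ n} |S (a + k) - S a|` for the maximal increment of the partial sums
`S` over a block of length `n`. Splitting a block of length `m + l` after `m` steps gives
`M(a, m + l) ≤ max (M(a, m)) (|S (a + m) - S a| + M(a + m, l))`, and the weighted inequality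
`(x + y)² ≤ (q + 1) x² + (q + 1) / q · y²` with `q = p + 1` lets the bound
`E[M(a, n)²] ≤ C n (p + 1)²` for blocks of length `n ≤ 2 ^ p` pass from `p` to `p + 1`.
Taking `p = ⌊log₂ n⌋ + 1` gives the factor `(log 2n)²`.
-/

open MeasureTheory Finset

theorem MeasureTheory.MemLp.finset_sup' {Ω ι E : Type*} {mΩ : MeasurableSpace Ω}
    {μ : Measure Ω} {p : ENNReal} [NormedAddCommGroup E] [Lattice E] [HasSolidNorm E]
    [IsOrderedAddMonoid E] {s : Finset ι} (hs : s.Nonempty) {f : ι → Ω → E}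
    (hf : ∀ i ∈ s, MemLp (f i) p μ) :
    MemLp (fun ω => s.sup' hs fun i => f i ω) p μ := by
  simpa only [← Finset.sup'_apply] using
    Finset.sup'_induction (p := fun g => MemLp g p μ) hs f (fun _ hg _ hh => hg.sup hh) hf

theorem add_sq_le_weighted {q : ℝ} (hq : 0 < q) (x y : ℝ) :
    (x + y) ^ 2 ≤ (q + 1) * x ^ 2 + (q + 1) / q * y ^ 2 :=
  calc (x + y) ^ 2 ≤ (x + y) ^ 2 + (q * x - y) ^ 2 / q := le_add_of_nonneg_right (by positivity)
    _ = (q + 1) * x ^ 2 + (q + 1) / q * y ^ 2 := by field_simp; ring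

theorem natLog_two_add_two_le_three_mul_log {n : ℕ} (hn : 1 ≤ n) :
    (Nat.log 2 n : ℝ) + 2 ≤ 3 * Real.log (2 * n) := by
  have hpow : (2 : ℝ) ^ Nat.log 2 n ≤ n := by exact_mod_cast Nat.pow_log_le_self 2 (by omega)
  have hlog : Nat.log 2 n * Real.log 2 ≤ Real.log n := by
    rw [← Real.log_pow]
    exact Real.log_le_log (by positivity) hpow
  rw [Real.log_mul two_ne_zero (by positivity)]
  nlinarith [Real.log_two_gt_d9, Real.log_natCast_nonneg n,
    Nat.cast_nonneg (α := ℝ) (Nat.log 2 n)]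

section MaxIncrement

variable {Ω : Type*}

def maxIncrement (S : ℕ → Ω → ℝ) (a n : ℕ) (ω : Ω) : ℝ :=
  (range (n + 1)).sup' nonempty_range_add_one fun k => |S (a + k) ω - S a ω|

variable {S : ℕ → Ω → ℝ}

theorem abs_sub_le_maxIncrement {a n k : ℕ} (hk : k ≤ n) (ω : Ω) :
    |S (a + k) ω - S a ω| ≤ maxIncrement S a n ω :=
  le_sup' (fun k => |S (a + k) ω - S a ω|) (mem_range_succ_iff.mpr hk)

theorem maxIncrement_nonneg (a n : ℕ) (ω : Ω) : 0 ≤ maxIncrement S a n ω :=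
  (abs_nonneg _).trans (abs_sub_le_maxIncrement n.zero_le ω)

theorem maxIncrement_le_of_le_one {a n : ℕ} (hn : n ≤ 1) (ω : Ω) :
    maxIncrement S a n ω ≤ |S (a + n) ω - S a ω| := by
  refine sup'_le _ _ fun k hk => ?_
  obtain rfl | rfl : k = 0 ∨ k = n := by rw [mem_range] at hk; omega
  · simp
  · exact le_rfl

theorem maxIncrement_add_le (a m l : ℕ) (ω : Ω) :
    maxIncrement S a (m + l) ω ≤
      max (maxIncrement S a m ω) (|S (a + m) ω - S a ω| + maxIncrement S (a + m) l ω) := by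
  refine sup'_le _ _ fun k hk => ?_
  rcases le_or_gt k m with hkm | hmk
  · exact le_max_of_le_left (abs_sub_le_maxIncrement hkm ω)
  · obtain ⟨k, rfl⟩ := Nat.exists_eq_add_of_le hmk.le
    have hkl : k ≤ l := by rw [mem_range] at hk; omega
    refine le_max_of_le_right ?_
    calc |S (a + (m + k)) ω - S a ω|
        ≤ |S (a + m + k) ω - S (a + m) ω| + |S (a + m) ω - S a ω| := by
          rw [← add_assoc]; exact abs_sub_le _ _ _
      _ ≤ |S (a + m) ω - S a ω| + maxIncrement S (a + m) l ω := by
          rw [add_comm]; gcongr; exact abs_sub_le_maxIncrement hkl ω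

theorem sq_maxIncrement_add_le {q : ℝ} (hq : 0 < q) (a m l : ℕ) (ω : Ω) :
    maxIncrement S a (m + l) ω ^ 2 ≤ maxIncrement S a m ω ^ 2
      + (q + 1) * (S (a + m) ω - S a ω) ^ 2 + (q + 1) / q * maxIncrement S (a + m) l ω ^ 2 := by
  have hw := add_sq_le_weighted hq |S (a + m) ω - S a ω| (maxIncrement S (a + m) l ω)
  rw [sq_abs] at hw
  have hD : 0 ≤ (q + 1) * (S (a + m) ω - S a ω) ^ 2 := by positivity
  have hB : 0 ≤ (q + 1) / q * maxIncrement S (a + m) l ω ^ 2 := by positivity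
  rcases le_max_iff.mp (maxIncrement_add_le a m l ω) with h | h
  · nlinarith [pow_le_pow_left₀ (maxIncrement_nonneg a (m + l) ω) h 2]
  · nlinarith [pow_le_pow_left₀ (maxIncrement_nonneg a (m + l) ω) h 2,
      sq_nonneg (maxIncrement S a m ω)]

variable {mΩ : MeasurableSpace Ω} {μ : Measure Ω}

theorem memLp_maxIncrement {p : ENNReal} (hS : ∀ k, MemLp (S k) p μ) (a n : ℕ) :
    MemLp (maxIncrement S a n) p μ :=
  MemLp.finset_sup' _ fun k _ => ((hS (a + k)).sub (hS a)).abs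

theorem integral_sq_maxIncrement_add_le (hS : ∀ k, MemLp (S k) 2 μ) {q : ℝ} (hq : 0 < q)
    (a m l : ℕ) :
    ∫ ω, maxIncrement S a (m + l) ω ^ 2 ∂μ ≤ ∫ ω, maxIncrement S a m ω ^ 2 ∂μ
      + (q + 1) * ∫ ω, (S (a + m) ω - S a ω) ^ 2 ∂μ
      + (q + 1) / q * ∫ ω, maxIncrement S (a + m) l ω ^ 2 ∂μ := by
  have hA := (memLp_maxIncrement hS a m).integrable_sq
  have hD : Integrable (fun ω => (q + 1) * (S (a + m) ω - S a ω) ^ 2) μ :=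
    ((hS (a + m)).sub (hS a)).integrable_sq.const_mul (q + 1)
  have hB := ((memLp_maxIncrement hS (a + m) l).integrable_sq).const_mul ((q + 1) / q)
  have hAD : Integrable (fun ω => maxIncrement S a m ω ^ 2
      + (q + 1) * (S (a + m) ω - S a ω) ^ 2) μ := hA.add hD
  rw [← integral_const_mul, ← integral_const_mul, ← integral_add hA hD, ← integral_add hAD hB]
  exact integral_mono_of_nonneg (.of_forall fun _ => sq_nonneg _) (hAD.add hB)
    (.of_forall fun ω => sq_maxIncrement_add_le hq a m l ω)

theorem integral_sq_maxIncrement_le (hS : ∀ k, MemLp (S k) 2 μ) {C : ℝ} (hC : 0 ≤ C) (p : ℕ) :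
    ∀ {a n : ℕ}, n ≤ 2 ^ p →
      (∀ i k, a ≤ i → i + k ≤ a + n → ∫ ω, (S (i + k) ω - S i ω) ^ 2 ∂μ ≤ C * k) →
      ∫ ω, maxIncrement S a n ω ^ 2 ∂μ ≤ C * n * (p + 1) ^ 2 := by
  induction p with
  | zero =>
    intro a n hn hincr
    have hpt : ∀ ω, maxIncrement S a n ω ^ 2 ≤ (S (a + n) ω - S a ω) ^ 2 := fun ω => by
      rw [← sq_abs (S (a + n) ω - S a ω)]
      exact pow_le_pow_left₀ (maxIncrement_nonneg a n ω) (maxIncrement_le_of_le_one hn ω) 2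
    calc ∫ ω, maxIncrement S a n ω ^ 2 ∂μ ≤ ∫ ω, (S (a + n) ω - S a ω) ^ 2 ∂μ :=
          integral_mono_of_nonneg (.of_forall fun _ => sq_nonneg _)
            ((hS (a + n)).sub (hS a)).integrable_sq (.of_forall hpt)
      _ ≤ C * n := hincr a n le_rfl le_rfl
      _ = C * n * ((0 : ℕ) + 1) ^ 2 := by simp
  | succ p ih =>
    intro a n hn hincr
    rw [pow_succ] at hn
    obtain ⟨m, l, rfl, hm, hl⟩ : ∃ m l, n = m + l ∧ m ≤ 2 ^ p ∧ l ≤ 2 ^ p :=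
      ⟨n / 2, n - n / 2, by omega, by omega, by omega⟩
    have hA := ih hm fun i k hi hik => hincr i k hi (by omega)
    have hB := ih (a := a + m) hl fun i k hi hik => hincr i k (by omega) (by omega)
    have hD := hincr a m le_rfl (by omega)
    have hq : (0 : ℝ) < p + 1 := by positivity
    calc ∫ ω, maxIncrement S a (m + l) ω ^ 2 ∂μ
        ≤ C * m * (p + 1) ^ 2 + (p + 1 + 1) * (C * m)
            + (p + 1 + 1) / (p + 1) * (C * l * (p + 1) ^ 2) := by
          refine (integral_sq_maxIncrement_add_le hS hq a m l).trans ?_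
          gcongr
      _ ≤ C * ↑(m + l) * (↑(p + 1) + 1) ^ 2 := by
          field_simp
          push_cast
          nlinarith [mul_nonneg hC (Nat.cast_nonneg (α := ℝ) m),
            mul_nonneg hC (Nat.cast_nonneg (α := ℝ) l), Nat.cast_nonneg (α := ℝ) p]

end MaxIncrement

theorem sum_Icc_one_add_sub_sum_Icc_one {M : Type*} [AddCommGroup M] (f : ℕ → M) (i k : ℕ) :
    ∑ j ∈ Icc 1 (i + k), f j - ∑ j ∈ Icc 1 i, f j = ∑ j ∈ Icc (i + 1) (i + k), f j := by
  have hIcc : ∀ x, Icc 1 x = Ioc 0 x := Icc_add_one_left_eq_Ioc 0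
  rw [sub_eq_iff_eq_add', hIcc, hIcc, Icc_add_one_left_eq_Ioc]
  exact (sum_Ioc_consecutive f i.zero_le (i.le_add_right k)).symm

/-- Rademacher–Menshov / Menshov maximal inequality: there is an absolute
constant `C'` such that for any square-integrable random variables `ξ₁,…,ξₙ` with
`E[(Σ_{j=ℓ₁}^{ℓ₂} ξ_j)²] ≤ C (ℓ₂-ℓ₁+1)` for all `1 ≤ ℓ₁ ≤ ℓ₂ ≤ n`, one has
`E[(max_{1 ≤ k ≤ n} |Σ_{j=1}^k ξ_j|)²] ≤ C' C n (log 2n)²`. -/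
theorem menshov_maximal_inequality :
    ∃ C' : ℝ, 0 < C' ∧
      ∀ (Ω : Type) (_ : MeasurableSpace Ω) (μ : Measure Ω), IsProbabilityMeasure μ →
      ∀ (n : ℕ) (hn : 1 ≤ n),
      ∀ (ξ : ℕ → Ω → ℝ), (∀ j, MeasureTheory.MemLp (ξ j) 2 μ) →
      ∀ C : ℝ, 0 ≤ C →
      (∀ ℓ₁ ℓ₂ : ℕ, 1 ≤ ℓ₁ → ℓ₁ ≤ ℓ₂ → ℓ₂ ≤ n →
        ∫ ω, (∑ j ∈ Finset.Icc ℓ₁ ℓ₂, ξ j ω) ^ 2 ∂μ ≤ C * (ℓ₂ - ℓ₁ + 1)) →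
      ∫ ω, ((Finset.Icc 1 n).sup' (Finset.nonempty_Icc.mpr hn) fun k => |∑ j ∈ Finset.Icc 1 k, ξ j ω|) ^ 2 ∂μ
        ≤ C' * C * n * (Real.log (2 * n)) ^ 2 := by
  refine ⟨9, by norm_num, fun Ω _ μ _ n hn ξ hξ C hC hblock => ?_⟩
  set S : ℕ → Ω → ℝ := fun k ω => ∑ j ∈ Icc 1 k, ξ j ω
  have hS : ∀ k, MemLp (S k) 2 μ := fun k => memLp_finsetSum _ fun j _ => hξ j
  have hincr : ∀ i k, 0 ≤ i → i + k ≤ 0 + n → ∫ ω, (S (i + k) ω - S i ω) ^ 2 ∂μ ≤ C * k := by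
    intro i k _ hik
    simp only [S, sum_Icc_one_add_sub_sum_Icc_one]
    rcases k.eq_zero_or_pos with rfl | hk
    · simp
    · refine (hblock (i + 1) (i + k) (by omega) (by omega) (by omega)).trans_eq ?_
      push_cast
      ring
  have hmax : ∀ ω,
      (Icc 1 n).sup' (nonempty_Icc.mpr hn) (fun k => |S k ω|) ≤ maxIncrement S 0 n ω :=
    fun ω => sup'_le _ _ fun k hk => by
      simpa [S] using abs_sub_le_maxIncrement (S := S) (a := 0) (mem_Icc.mp hk).2 ω
  have hmax_nonneg : ∀ ω, 0 ≤ (Icc 1 n).sup' (nonempty_Icc.mpr hn) (fun k => |S k ω|) :=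
    fun ω => le_sup'_of_le _ (right_mem_Icc.mpr hn) (abs_nonneg _)
  calc ∫ ω, ((Icc 1 n).sup' (nonempty_Icc.mpr hn) fun k => |S k ω|) ^ 2 ∂μ
      ≤ ∫ ω, maxIncrement S 0 n ω ^ 2 ∂μ :=
        integral_mono_of_nonneg (.of_forall fun _ => sq_nonneg _)
          (memLp_maxIncrement hS 0 n).integrable_sq
          (.of_forall fun ω => pow_le_pow_left₀ (hmax_nonneg ω) (hmax ω) 2)
    _ ≤ C * n * ((Nat.log 2 n + 1 : ℕ) + 1) ^ 2 :=
        integral_sq_maxIncrement_le hS hC _ (Nat.lt_pow_succ_log_self one_lt_two n).le hincr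
    _ ≤ C * n * (3 * Real.log (2 * n)) ^ 2 := by
        gcongr
        push_cast
        linarith [natLog_two_add_two_le_three_mul_log hn]
    _ = 9 * C * n * Real.log (2 * n) ^ 2 := by ring
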